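/- Theorem 1.2: Let M ∈ ARI be alternal and push-invariant, and suppose ΔM is a polynomial mould (M ∈ ARI^Δ). Set A' := dur M. Then the following are equivalent: (i) A satisfies the strict Fay relations, i.e. ℱ(A')(u_1,…,u_r) = 0 for every r ≥ 2; (ii) swap M satisfies the first alternality relation, i.e. Σ_{i=1}^{r} (swap M)(v_2,…,v_i, v_1, v_{i+1},…,v_r) = 0 for every r ≥ 2; (iii) swap M is circ-neutral, i.e. Σ_{i=0}^{r−1} (circ^i(swap M))(v_1,…,v_r) = 0 for every r ≥ 2. -/
import Mathlib


/-!
Moulds over ℚ: a mould is a family `A = (A_r)_{r ≥ 0}` where `A_r` lies in the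
field `ℚ(u_1, …, u_r)` of rational functions in `r` commuting variables,
realized here as the fraction field of `MvPolynomial (Fin r) ℚ`.
Substitution of ℚ-linearly independent linear forms is realized by lifting the
corresponding (injective) polynomial substitution map to the fraction fields.
-/

noncomputable section

/-- The polynomial ring `ℚ[u_1, …, u_r]` (variables are 0-indexed). -/
abbrev MPoly (r : ℕ) : Type := MvPolynomial (Fin r) ℚ

/-- The field of rational functions `ℚ(u_1, …, u_r)`. -/
abbrev MFrac (r : ℕ) : Type := FractionRing (MPoly r)

/-- A mould over ℚ: its depth-`r` part is a rational function of `r` variables;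
its depth-`0` part is a constant. -/
abbrev Mould : Type := (r : ℕ) → MFrac r

/-- The canonical embedding of polynomials into rational functions. -/
def toF {r : ℕ} (p : MPoly r) : MFrac r := algebraMap (MPoly r) (MFrac r) p

/-- The constant `q` viewed as a rational function in `r` variables. -/
def constF (r : ℕ) (q : ℚ) : MFrac r := toF (MvPolynomial.C q)

/-- The variable `u_{k+1}` (0-indexed: `X k`), with junk value `0` out of range. -/
def Xn (r k : ℕ) : MPoly r := if h : k < r then MvPolynomial.X ⟨k, h⟩ else 0

/-- The linear form `u_1 + ⋯ + u_n`. -/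
def sumXn (r n : ℕ) : MPoly r := ∑ k ∈ Finset.range n, Xn r k

/-- Substitution `A(ℓ_1, …, ℓ_s)` of a family of polynomials (in applications:
ℚ-linearly independent linear forms in `u_1, …, u_r`) into a rational function
`A ∈ ℚ(u_1,…,u_s)`, obtained by lifting the polynomial substitution map to the
fraction fields; junk value `0` if the substitution map is not injective
(which never occurs for linearly independent linear forms). -/
def msubst {s r : ℕ} (ℓ : Fin s → MPoly r) (A : MFrac s) : MFrac r := by
  classical
  exact if h : Function.Injective ((algebraMap (MPoly r) (MFrac r)).comp
      (MvPolynomial.aeval (R := ℚ) ℓ).toRingHom)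
    then IsFractionRing.lift h A else 0

/-! ### The basic mould operators -/

/-- Arguments of the swap: `(swap A)(v_1,…,v_r) = A(v_r, v_{r-1}-v_r, …, v_1-v_2)`. -/
def swapArgs (r : ℕ) : Fin r → MPoly r := fun m => Xn r (r - 1 - m.val) - Xn r (r - m.val)

/-- The swap of a mould. -/
def swapM (A : Mould) : Mould := fun r => msubst (swapArgs r) (A r)

/-- `(push_u A)(u_1,…,u_r) = A(−u_1−⋯−u_r, u_1,…,u_{r−1})`. -/
def pushArgs (r : ℕ) : Fin r → MPoly r := fun m =>
  if m.val = 0 then -(sumXn r r) else Xn r (m.val - 1)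

def pushU (A : Mould) : Mould := fun r => msubst (pushArgs r) (A r)

/-- `(push_u⁻¹ A)(u_1,…,u_r) = A(u_2,…,u_r, −u_1−⋯−u_r)`. -/
def pushInvArgs (r : ℕ) : Fin r → MPoly r := fun m =>
  if m.val = r - 1 then -(sumXn r r) else Xn r (m.val + 1)

def pushUInv (A : Mould) : Mould := fun r => msubst (pushInvArgs r) (A r)

/-- `(push_v B)(v_1,…,v_r) = B(−v_r, v_1−v_r, …, v_{r−1}−v_r)`. -/
def pushVArgs (r : ℕ) : Fin r → MPoly r := fun m =>
  if m.val = 0 then -(Xn r (r - 1)) else Xn r (m.val - 1) - Xn r (r - 1)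

def pushV (A : Mould) : Mould := fun r => msubst (pushVArgs r) (A r)

/-- `(push_v⁻¹ B)(v_1,…,v_r) = B(v_2−v_1, …, v_r−v_1, −v_1)`. -/
def pushVInvArgs (r : ℕ) : Fin r → MPoly r := fun m =>
  if m.val = r - 1 then -(Xn r 0) else Xn r (m.val + 1) - Xn r 0

def pushVInv (A : Mould) : Mould := fun r => msubst (pushVInvArgs r) (A r)

/-- `(circ B)(v_1,…,v_r) = B(v_2,…,v_r,v_1)`. -/
def circArgs (r : ℕ) : Fin r → MPoly r := fun m =>
  if m.val = r - 1 then Xn r 0 else Xn r (m.val + 1)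

def circM (A : Mould) : Mould := fun r => msubst (circArgs r) (A r)

/-- `(dur A)(u_1,…,u_r) = (u_1+⋯+u_r)·A(u_1,…,u_r)`. -/
def durM (A : Mould) : Mould := fun r => toF (sumXn r r) * A r

/-- `(dar A)(u_1,…,u_r) = u_1⋯u_r·A(u_1,…,u_r)`. -/
def darM (A : Mould) : Mould := fun r => toF (∏ k ∈ Finset.range r, Xn r k) * A r

/-- `(dar⁻¹ A)(u_1,…,u_r) = A(u_1,…,u_r)/(u_1⋯u_r)`. -/
def darInv (A : Mould) : Mould := fun r => A r / toF (∏ k ∈ Finset.range r, Xn r k)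

/-- `Δ = dar ∘ dur`. -/
def deltaM (A : Mould) : Mould := darM (durM A)

/-- `Δ⁻¹`, dividing the depth-`r` part by `u_1⋯u_r·(u_1+⋯+u_r)`. -/
def deltaInv (A : Mould) : Mould := fun r =>
  A r / toF ((∏ k ∈ Finset.range r, Xn r k) * sumXn r r)

/-! ### The Fay operator -/

/-- Arguments of the `i`-th Fay term (`1 ≤ i ≤ r`):
`(u_2,…,u_i, −ū_i, ū_{i+1}, u_{i+2},…,u_r)` for `i < r`, and
`(u_2,…,u_r, −ū_r)` for `i = r`, where `ū_i = u_1+⋯+u_i`. -/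
def fayArgs (r i : ℕ) : Fin r → MPoly r := fun m =>
  if m.val + 1 < i then Xn r (m.val + 1)
  else if m.val + 1 = i then -(sumXn r i)
  else if m.val = i then sumXn r (i + 1)
  else Xn r m.val

/-- The Fay operator:
`ℱ(B)(u_1,…,u_r) = B(u_1,…,u_r) + B(u_2,…,u_r,−ū_r) + Σ_{i=1}^{r−1} B(u_2,…,u_i,−ū_i,ū_{i+1},u_{i+2},…,u_r)`. -/
def Fay (A : Mould) : Mould := fun r =>
  A r + ∑ i ∈ Finset.Icc 1 r, msubst (fayArgs r i) (A r)

/-! ### Shuffles, alternality, push-invariance and circ-neutrality -/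

/-- Arguments realizing the shuffle of `(u_1,…,u_k)` and `(u_{k+1},…,u_r)` whose
set of positions for the first word is `S` (with `S.card = k`). -/
def shuffleArgs (r : ℕ) (S : Finset (Fin r)) : Fin r → MPoly r := fun m =>
  if m ∈ S then Xn r ((S.filter (fun x => x < m)).card)
  else Xn r (S.card + ((Sᶜ.filter (fun x => x < m)).card))

/-- A mould is alternal if all its shuffle sums
`A(sh((u_1,…,u_k),(u_{k+1},…,u_r)))` for `1 ≤ k ≤ r−1` vanish. -/
def Alternal (A : Mould) : Prop :=
  ∀ r k : ℕ, 1 ≤ k → k < r →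
    ∑ S ∈ Finset.powersetCard k (Finset.univ : Finset (Fin r)),
      msubst (shuffleArgs r S) (A r) = 0

/-- A mould is push-invariant if `push_u A = A` in every depth `r ≥ 1`. -/
def PushInvariant (A : Mould) : Prop := ∀ r : ℕ, 1 ≤ r → pushU A r = A r

/-- Arguments of the `i`-th term (`1 ≤ i ≤ r`) of the shuffle sum
`B(sh((v_1),(v_2,…,v_r)))`, namely `(v_2,…,v_i, v_1, v_{i+1},…,v_r)`. -/
def sh1Args (r i : ℕ) : Fin r → MPoly r := fun m =>
  if m.val + 1 < i then Xn r (m.val + 1)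
  else if m.val + 1 = i then Xn r 0
  else Xn r m.val

/-! ### Mould multiplication, `arat`, and exponentials -/

/-- Arguments `(u_{a+1}, …, u_{a+s})` (a consecutive segment of variables). -/
def segArgs (r a : ℕ) {s : ℕ} : Fin s → MPoly r := fun m => Xn r (a + m.val)

/-- Arguments `(u_1,…,u_{a−1}, u_a+⋯+u_b, u_{b+1},…,u_r)` (the block `u_a…u_b`
merged into a single sum), of length `s = r − (b − a)`. -/
def mergeArgs (r a b : ℕ) {s : ℕ} : Fin s → MPoly r := fun m =>
  if m.val + 1 < a then Xn r m.val
  else if m.val + 1 = a then ∑ k ∈ Finset.Icc (a - 1) (b - 1), Xn r k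
  else Xn r (b + m.val - a)

/-- The mould `arat(M)·Q`. -/
def arat (M Q : Mould) : Mould := fun r =>
  (∑ i ∈ Finset.Icc 1 (r - 1), ∑ j ∈ Finset.Icc (i + 1) (r - 1),
      msubst (segArgs r i) (M (j - i)) *
        (msubst (mergeArgs r i j) (Q (r - (j - i))) -
          msubst (mergeArgs r (i + 1) (j + 1)) (Q (r - (j - i)))))
  + (∑ i ∈ Finset.Icc 1 (r - 1),
      msubst (segArgs r 0) (M i) *
        (msubst (segArgs r i) (Q (r - i)) - msubst (mergeArgs r 1 (i + 1)) (Q (r - i))))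
  + (∑ i ∈ Finset.Icc 1 (r - 1),
      msubst (segArgs r i) (M (r - i)) *
        (msubst (mergeArgs r i r) (Q i) - msubst (segArgs r 0) (Q i)))

/-- Mould multiplication `mu(A,B)(u_1,…,u_r) = Σ_i A(u_1,…,u_i)B(u_{i+1},…,u_r)`. -/
def muM (A B : Mould) : Mould := fun r =>
  ∑ i ∈ Finset.range (r + 1), msubst (segArgs r 0) (A i) * msubst (segArgs r i) (B (r - i))

/-- The unit mould for `mu`. -/
def oneMould : Mould := fun r => if r = 0 then 1 else 0

/-- `mu`-powers of a mould. -/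
def muPow (Q : Mould) : ℕ → Mould
  | 0 => oneMould
  | n + 1 => muM (muPow Q n) Q

/-- `exp_mu(Q) = Σ_{n≥0} Q^{·n}/n!`; for `Q ∈ ARI` this is a finite sum in each
depth, since `Q^{·n}` vanishes in depths `< n`. -/
def expMu (Q : Mould) : Mould := fun r =>
  ∑ n ∈ Finset.range (r + 1), constF r (1 / (n.factorial : ℚ)) * muPow Q n r

/-- A polynomial mould: each depth-`r` part is (the image of) a polynomial. -/
def IsPolynomialMould (A : Mould) : Prop :=
  ∀ r : ℕ, A r ∈ Set.range (algebraMap (MPoly r) (MFrac r))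

open MvPolynomial Finset Function

section Base
variable {s t r : ℕ}

/-- `g` is a left inverse substitution for `ℓ`. -/
def LInv (ℓ : Fin s → MPoly r) (g : Fin r → MPoly s) : Prop :=
  ∀ m : Fin s, MvPolynomial.aeval g (ℓ m) = MvPolynomial.X m

lemma LInv.leftInverse {ℓ : Fin s → MPoly r} {g : Fin r → MPoly s} (h : LInv ℓ g) :
    ∀ p : MPoly s, aeval g (aeval ℓ p) = p := by
  intro p
  have h2 : (aeval (R := ℚ) g).comp (aeval ℓ) = AlgHom.id ℚ (MPoly s) := by
    rw [MvPolynomial.comp_aeval]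
    have : (fun i => aeval (R := ℚ) g (ℓ i)) = X := funext h
    rw [this]; exact MvPolynomial.aeval_X_left
  have := AlgHom.congr_fun h2 p
  simpa using this

lemma LInv.inj {ℓ : Fin s → MPoly r} {g : Fin r → MPoly s} (h : LInv ℓ g) :
    Injective (aeval (R := ℚ) ℓ : MPoly s →ₐ[ℚ] MPoly r) := by
  intro a b hab
  have := congrArg (aeval (R := ℚ) g) hab
  rwa [h.leftInverse, h.leftInverse] at this

lemma compInj (ℓ : Fin s → MPoly r) (h : Injective (aeval (R := ℚ) ℓ : MPoly s →ₐ[ℚ] MPoly r)) :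
    Injective ((algebraMap (MPoly r) (MFrac r)).comp (MvPolynomial.aeval (R := ℚ) ℓ).toRingHom) := by
  rw [RingHom.coe_comp]
  exact (IsFractionRing.injective (MPoly r) (MFrac r)).comp h

lemma msubst_eq_lift {ℓ : Fin s → MPoly r} (h : Injective (aeval (R := ℚ) ℓ : MPoly s →ₐ[ℚ] MPoly r))
    (A : MFrac s) : msubst ℓ A = IsFractionRing.lift (compInj ℓ h) A := by
  rw [msubst, dif_pos (compInj ℓ h)]

lemma msubst_toF {ℓ : Fin s → MPoly r} (h : Injective (aeval (R := ℚ) ℓ : MPoly s →ₐ[ℚ] MPoly r))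
    (p : MPoly s) : msubst ℓ (toF p) = toF (aeval ℓ p) := by
  rw [msubst_eq_lift h, toF, IsFractionRing.lift_algebraMap]
  rfl

lemma msubst_add {ℓ : Fin s → MPoly r} (h : Injective (aeval (R := ℚ) ℓ : MPoly s →ₐ[ℚ] MPoly r))
    (A B : MFrac s) : msubst ℓ (A + B) = msubst ℓ A + msubst ℓ B := by
  simp [msubst_eq_lift h]

lemma msubst_mul {ℓ : Fin s → MPoly r} (h : Injective (aeval (R := ℚ) ℓ : MPoly s →ₐ[ℚ] MPoly r))
    (A B : MFrac s) : msubst ℓ (A * B) = msubst ℓ A * msubst ℓ B := by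
  simp [msubst_eq_lift h]

lemma msubst_sum {ℓ : Fin s → MPoly r} (h : Injective (aeval (R := ℚ) ℓ : MPoly s →ₐ[ℚ] MPoly r))
    {ι : Type*} (S : Finset ι) (f : ι → MFrac s) :
    msubst ℓ (∑ i ∈ S, f i) = ∑ i ∈ S, msubst ℓ (f i) := by
  simp only [msubst_eq_lift h]
  exact map_sum _ _ _

lemma msubst_injective {ℓ : Fin s → MPoly r}
    (h : Injective (aeval (R := ℚ) ℓ : MPoly s →ₐ[ℚ] MPoly r)) :
    Injective (msubst ℓ) := by
  intro a b hab
  rw [msubst_eq_lift h, msubst_eq_lift h] at hab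
  exact (IsFractionRing.lift (compInj ℓ h)).injective hab

lemma msubst_eq_zero_iff {ℓ : Fin s → MPoly r}
    (h : Injective (aeval (R := ℚ) ℓ : MPoly s →ₐ[ℚ] MPoly r)) {A : MFrac s} :
    msubst ℓ A = 0 ↔ A = 0 := by
  constructor
  · intro h0
    apply msubst_injective h
    rw [h0, msubst_eq_lift h, map_zero]
  · intro h0; rw [h0, msubst_eq_lift h, map_zero]

lemma aeval_comp_eq (ℓ : Fin t → MPoly r) (ℓ' : Fin s → MPoly t) :
    (aeval (R := ℚ) ℓ).comp (aeval (R := ℚ) ℓ') = aeval (fun m => aeval (R := ℚ) ℓ (ℓ' m)) :=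
  MvPolynomial.comp_aeval (f := ℓ') (aeval (R := ℚ) ℓ)

lemma msubst_msubst {ℓ : Fin t → MPoly r} {ℓ' : Fin s → MPoly t}
    (h : Injective (aeval (R := ℚ) ℓ : MPoly t →ₐ[ℚ] MPoly r))
    (h' : Injective (aeval (R := ℚ) ℓ' : MPoly s →ₐ[ℚ] MPoly t)) (A : MFrac s) :
    msubst ℓ (msubst ℓ' A) = msubst (fun m => aeval (R := ℚ) ℓ (ℓ' m)) A := by
  have hc : Injective (aeval (R := ℚ) (fun m => aeval (R := ℚ) ℓ (ℓ' m)) :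
      MPoly s →ₐ[ℚ] MPoly r) := by
    have : ⇑(aeval (R := ℚ) (fun m => aeval (R := ℚ) ℓ (ℓ' m)) : MPoly s →ₐ[ℚ] MPoly r)
        = ⇑((aeval (R := ℚ) ℓ).comp (aeval (R := ℚ) ℓ')) := by
      rw [aeval_comp_eq]
    rw [this, AlgHom.coe_comp]
    exact h.comp h'
  rw [msubst_eq_lift h', msubst_eq_lift h, msubst_eq_lift hc]
  have : (IsFractionRing.lift (compInj ℓ h)).comp (IsFractionRing.lift (compInj ℓ' h'))
      = IsFractionRing.lift (K := MFrac s) (compInj _ hc) := by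
    apply IsLocalization.ringHom_ext (R := MPoly s) (M := nonZeroDivisors (MPoly s)) (S := MFrac s) (P := MFrac r)
    refine RingHom.ext fun p => ?_
    simp only [RingHom.coe_comp, comp_apply, IsFractionRing.lift_algebraMap]
    exact congrArg (algebraMap (MPoly r) (MFrac r))
      (MvPolynomial.comp_aeval_apply (f := ℓ') (aeval (R := ℚ) ℓ) p)
  rw [← this]; rfl

lemma msubst_id (A : MFrac r) : msubst (fun m : Fin r => (X m : MPoly r)) A = A := by
  have h : Injective (aeval (R := ℚ) (fun m : Fin r => (X m : MPoly r)) : MPoly r →ₐ[ℚ] MPoly r) := by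
    have : (fun m : Fin r => (X m : MPoly r)) = X := rfl
    rw [this, MvPolynomial.aeval_X_left]
    exact fun a b hab => hab
  rw [msubst_eq_lift h]
  have : IsFractionRing.lift (compInj _ h) = RingHom.id (MFrac r) := by
    apply IsLocalization.ringHom_ext (R := MPoly r) (M := nonZeroDivisors (MPoly r)) (S := MFrac r) (P := MFrac r)
    refine RingHom.ext fun p => ?_
    simp only [RingHom.coe_comp, comp_apply, IsFractionRing.lift_algebraMap, RingHom.id_apply]
    show algebraMap (MPoly r) (MFrac r) (aeval (R := ℚ) (X : Fin r → MPoly r) p) = _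
    rw [MvPolynomial.aeval_X_left_apply]
  rw [this]; rfl

end Base

-- auxiliary substitution families
def swapInv (r : ℕ) : Fin r → MPoly r := fun m => sumXn r (r - m.val)
def psiA (r : ℕ) : Fin r → MPoly r := fun m =>
  if m.val = 0 then -(Xn r 0) else sumXn r (r + 1 - m.val) - Xn r 0
def psiInv (r : ℕ) : Fin r → MPoly r := fun m =>
  if m.val = 0 then -(Xn r 0) else if m.val = 1 then Xn r (r - 1)
  else Xn r (r - m.val) - Xn r (r - m.val + 1)
def sh1Inv (r i : ℕ) : Fin r → MPoly r := fun m =>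
  if m.val = 0 then Xn r (i - 1) else if m.val < i then Xn r (m.val - 1) else Xn r m.val
def fayInv (r i : ℕ) : Fin r → MPoly r := fun m =>
  if m.val = 0 then -(sumXn r i) else if m.val < i then Xn r (m.val - 1)
  else if m.val = i then Xn r i + Xn r (i - 1) else Xn r m.val
def rotArgs (r k : ℕ) : Fin r → MPoly r := fun m =>
  if m.val + k < r then Xn r (m.val + k) - Xn r (k - 1)
  else if m.val + k = r then -(Xn r (k - 1))
  else Xn r (m.val + k - r - 1) - Xn r (k - 1)
def circComp (r i : ℕ) : Fin r → MPoly r := fun m => Xn r ((m.val + i) % r)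
def circCompInv (r i : ℕ) : Fin r → MPoly r := fun m => Xn r ((m.val + (r - i)) % r)

section Helpers
open MvPolynomial Finset Function
variable {r : ℕ}

lemma Xn_val (m : Fin r) : Xn r m.val = X m := by
  rw [Xn, dif_pos m.isLt]

lemma Xn_zero_of_ge {k : ℕ} (h : r ≤ k) : Xn r k = 0 := by
  rw [Xn, dif_neg (by omega)]

lemma aeval_XnF {ℓ : Fin r → MPoly r} {F : ℕ → MPoly r} (hF : ∀ m : Fin r, ℓ m = F m.val)
    {k : ℕ} (hk : k < r) : aeval (R := ℚ) ℓ (Xn r k) = F k := by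
  rw [Xn, dif_pos hk, aeval_X, hF ⟨k, hk⟩]

lemma aeval_Xn_zero {ℓ : Fin r → MPoly r} {k : ℕ} (hk : r ≤ k) :
    aeval (R := ℚ) ℓ (Xn r k) = 0 := by
  rw [Xn, dif_neg (by omega), map_zero]

lemma aeval_sumXnF {ℓ : Fin r → MPoly r} {F : ℕ → MPoly r} (hF : ∀ m : Fin r, ℓ m = F m.val)
    {t : ℕ} (ht : t ≤ r) : aeval (R := ℚ) ℓ (sumXn r t) = ∑ k ∈ range t, F k := by
  rw [sumXn, map_sum]
  exact Finset.sum_congr rfl fun k hk => aeval_XnF hF (by simp at hk; omega)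

lemma sumXn_one (hr : 1 ≤ r) : sumXn r 1 = Xn r 0 := by
  rw [sumXn, Finset.sum_range_one]

lemma sumXn_succ (n : ℕ) : sumXn r (n + 1) = sumXn r n + Xn r n := Finset.sum_range_succ _ _

lemma sum_Xn_shift (t : ℕ) : ∑ k ∈ range t, Xn r (k + 1) = sumXn r (t + 1) - Xn r 0 := by
  have := Finset.sum_range_succ' (fun k => Xn r k) t
  rw [sumXn] at *
  rw [this]; ring

lemma sum_Xn_Ico {a b : ℕ} (hab : a ≤ b) :
    ∑ k ∈ Finset.Ico a b, Xn r k = sumXn r b - sumXn r a := by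
  rw [sumXn, sumXn, ← Finset.sum_Ico_eq_sub _ hab]

lemma sum_swapN (t : ℕ) :
    ∑ k ∈ range t, (Xn r (r - 1 - k) - Xn r (r - k)) = Xn r (r - t) := by
  have h : ∀ k, Xn r (r - 1 - k) - Xn r (r - k)
      = Xn r (r - (k + 1)) - Xn r (r - k) := by
    intro k; congr 2; omega
  calc ∑ k ∈ range t, (Xn r (r - 1 - k) - Xn r (r - k))
      = ∑ k ∈ range t, ((fun j => Xn r (r - j)) (k + 1) - (fun j => Xn r (r - j)) k) := by
        exact Finset.sum_congr rfl fun k _ => h k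
    _ = Xn r (r - t) - Xn r (r - 0) := Finset.sum_range_sub (fun j => Xn r (r - j)) t
    _ = Xn r (r - t) := by rw [Nat.sub_zero, Xn_zero_of_ge (le_refl r)]; ring

end Helpers

section Sums
open MvPolynomial Finset Function
variable {r : ℕ}

lemma sum_Ico_sub' (f : ℕ → MPoly r) {a b : ℕ} (hab : a ≤ b) :
    ∑ k ∈ Finset.Ico a b, (f (k + 1) - f k) = f b - f a := by
  rw [Finset.sum_Ico_eq_sub _ hab, Finset.sum_range_sub, Finset.sum_range_sub]; ring

lemma sum_pushInvN (hr : 1 ≤ r) :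
    ∑ k ∈ range r, (if k = r - 1 then -(sumXn r r) else Xn r (k + 1)) = -(Xn r 0) := by
  obtain ⟨n, rfl⟩ : ∃ n, r = n + 1 := ⟨r - 1, by omega⟩
  rw [Finset.sum_range_succ]
  rw [Finset.sum_congr rfl (fun k hk => if_neg (by simp at hk; omega)), sum_Xn_shift,
    if_pos (by omega)]
  ring

variable {i t : ℕ}

lemma sum_fayN_lt (ht : t + 1 ≤ i) :
    ∑ k ∈ range t, (if k + 1 < i then Xn r (k + 1) else if k + 1 = i then -(sumXn r i)
      else if k = i then sumXn r (i + 1) else Xn r k) = sumXn r (t + 1) - Xn r 0 := by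
  rw [Finset.sum_congr rfl (fun k hk => if_pos (by simp at hk; omega))]
  exact sum_Xn_shift t

lemma sum_fayN_eq (hi : 1 ≤ i) :
    ∑ k ∈ range i, (if k + 1 < i then Xn r (k + 1) else if k + 1 = i then -(sumXn r i)
      else if k = i then sumXn r (i + 1) else Xn r k) = -(Xn r 0) := by
  obtain ⟨j, rfl⟩ : ∃ j, i = j + 1 := ⟨i - 1, by omega⟩
  rw [Finset.sum_range_succ, sum_fayN_lt (le_refl _), if_neg (by omega), if_pos rfl]
  ring

lemma sum_fayN_gt (hi : 1 ≤ i) (h1 : i + 1 ≤ t) :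
    ∑ k ∈ range t, (if k + 1 < i then Xn r (k + 1) else if k + 1 = i then -(sumXn r i)
      else if k = i then sumXn r (i + 1) else Xn r k) = sumXn r t - Xn r 0 := by
  rw [Finset.range_eq_Ico, ← Finset.sum_Ico_consecutive _ (Nat.zero_le (i+1)) h1,
    ← Finset.range_eq_Ico, Finset.sum_range_succ, sum_fayN_eq hi,
    if_neg (by omega), if_neg (by omega), if_pos rfl]
  rw [Finset.sum_congr rfl (fun k hk => by
    rw [if_neg (by simp at hk; omega), if_neg (by simp at hk; omega),
      if_neg (by simp at hk; omega)])]
  rw [sum_Xn_Ico h1, sumXn_succ]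
  ring

lemma sum_psiInvN (h2 : 2 ≤ t) (htr : t ≤ r) :
    ∑ k ∈ range t, (if k = 0 then -(Xn r 0) else if k = 1 then Xn r (r - 1)
      else Xn r (r - k) - Xn r (r - k + 1)) = Xn r (r + 1 - t) - Xn r 0 := by
  rw [Finset.range_eq_Ico, ← Finset.sum_Ico_consecutive _ (Nat.zero_le 2) h2]
  have e1 : ∑ k ∈ Finset.Ico 0 2, (if k = 0 then -(Xn r 0) else if k = 1 then Xn r (r - 1)
      else Xn r (r - k) - Xn r (r - k + 1)) = -(Xn r 0) + Xn r (r - 1) := by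
    rw [show Finset.Ico 0 2 = {0, 1} from rfl]
    simp
  rw [e1, Finset.sum_congr rfl (fun k hk => by
    rw [if_neg (by simp at hk; omega), if_neg (by simp at hk; omega)])]
  have e2 : ∑ k ∈ Finset.Ico 2 t, (Xn r (r - k) - Xn r (r - k + 1))
      = ∑ k ∈ Finset.Ico 2 t, ((fun j => Xn r (r - j + 1)) (k + 1)
          - (fun j => Xn r (r - j + 1)) k) := by
    refine Finset.sum_congr rfl (fun k hk => ?_)
    simp only []
    have hk' : 2 ≤ k ∧ k < t := by simpa using hk
    have : r - (k + 1) + 1 = r - k := by omega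
    rw [this]
  rw [e2, sum_Ico_sub' (fun j => Xn r (r - j + 1)) h2]
  have : r - 2 + 1 = r - 1 := by omega
  rw [this]
  have : r - t + 1 = r + 1 - t := by omega
  rw [this]
  ring

lemma sum_fayInvN_eq (hi : 1 ≤ i) (hir : i ≤ r) :
    ∑ k ∈ range i, (if k = 0 then -(sumXn r i) else if k < i then Xn r (k - 1)
      else if k = i then Xn r i + Xn r (i - 1) else Xn r k) = -(Xn r (i - 1)) := by
  obtain ⟨j, rfl⟩ : ∃ j, i = j + 1 := ⟨i - 1, by omega⟩
  rw [Finset.sum_range_succ']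
  rw [Finset.sum_congr rfl (fun k hk => by
    rw [if_neg (by omega), if_pos (by simp at hk; omega)])]
  rw [if_pos rfl]
  simp only [Nat.add_sub_cancel]
  rw [show ∑ k ∈ range j, Xn r k = sumXn r j from rfl, sumXn_succ]
  ring

lemma sum_fayInvN_succ (hi : 1 ≤ i) (hir : i < r) :
    ∑ k ∈ range (i + 1), (if k = 0 then -(sumXn r i) else if k < i then Xn r (k - 1)
      else if k = i then Xn r i + Xn r (i - 1) else Xn r k) = Xn r i := by
  rw [Finset.sum_range_succ, sum_fayInvN_eq hi (by omega), if_neg (by omega),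
    if_neg (by omega), if_pos rfl]
  ring

end Sums

section LInvs
open MvPolynomial Finset Function
variable {r : ℕ}

-- ℕ-indexed versions of the substitution families
def swapN (r : ℕ) : ℕ → MPoly r := fun k => Xn r (r - 1 - k) - Xn r (r - k)
def swapInvN (r : ℕ) : ℕ → MPoly r := fun k => sumXn r (r - k)
def pushN (r : ℕ) : ℕ → MPoly r := fun k => if k = 0 then -(sumXn r r) else Xn r (k - 1)
def pushInvN (r : ℕ) : ℕ → MPoly r := fun k => if k = r - 1 then -(sumXn r r) else Xn r (k + 1)
def pushVN (r : ℕ) : ℕ → MPoly r :=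
  fun k => if k = 0 then -(Xn r (r - 1)) else Xn r (k - 1) - Xn r (r - 1)
def pushVInvN (r : ℕ) : ℕ → MPoly r :=
  fun k => if k = r - 1 then -(Xn r 0) else Xn r (k + 1) - Xn r 0
def circN (r : ℕ) : ℕ → MPoly r := fun k => if k = r - 1 then Xn r 0 else Xn r (k + 1)
def sh1N (r i : ℕ) : ℕ → MPoly r :=
  fun k => if k + 1 < i then Xn r (k + 1) else if k + 1 = i then Xn r 0 else Xn r k
def fayN (r i : ℕ) : ℕ → MPoly r := fun k =>
  if k + 1 < i then Xn r (k + 1) else if k + 1 = i then -(sumXn r i)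
  else if k = i then sumXn r (i + 1) else Xn r k
def psiN (r : ℕ) : ℕ → MPoly r :=
  fun k => if k = 0 then -(Xn r 0) else sumXn r (r + 1 - k) - Xn r 0
def psiInvN (r : ℕ) : ℕ → MPoly r := fun k =>
  if k = 0 then -(Xn r 0) else if k = 1 then Xn r (r - 1)
  else Xn r (r - k) - Xn r (r - k + 1)
def sh1InvN (r i : ℕ) : ℕ → MPoly r := fun k =>
  if k = 0 then Xn r (i - 1) else if k < i then Xn r (k - 1) else Xn r k
def fayInvN (r i : ℕ) : ℕ → MPoly r := fun k =>
  if k = 0 then -(sumXn r i) else if k < i then Xn r (k - 1)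
  else if k = i then Xn r i + Xn r (i - 1) else Xn r k
def rotN (r k : ℕ) : ℕ → MPoly r := fun m =>
  if m + k < r then Xn r (m + k) - Xn r (k - 1)
  else if m + k = r then -(Xn r (k - 1))
  else Xn r (m + k - r - 1) - Xn r (k - 1)
def circCompN (r i : ℕ) : ℕ → MPoly r := fun m => Xn r ((m + i) % r)
def circCompInvN (r i : ℕ) : ℕ → MPoly r := fun m => Xn r ((m + (r - i)) % r)

lemma swapArgs_eqN : ∀ m : Fin r, swapArgs r m = swapN r m.val := fun _ => rfl
lemma swapInv_eqN : ∀ m : Fin r, swapInv r m = swapInvN r m.val := fun _ => rfl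
lemma pushArgs_eqN : ∀ m : Fin r, pushArgs r m = pushN r m.val := fun _ => rfl
lemma pushInvArgs_eqN : ∀ m : Fin r, pushInvArgs r m = pushInvN r m.val := fun _ => rfl
lemma pushVArgs_eqN : ∀ m : Fin r, pushVArgs r m = pushVN r m.val := fun _ => rfl
lemma pushVInvArgs_eqN : ∀ m : Fin r, pushVInvArgs r m = pushVInvN r m.val := fun _ => rfl
lemma circArgs_eqN : ∀ m : Fin r, circArgs r m = circN r m.val := fun _ => rfl
lemma sh1Args_eqN (i : ℕ) : ∀ m : Fin r, sh1Args r i m = sh1N r i m.val := fun _ => rfl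
lemma fayArgs_eqN (i : ℕ) : ∀ m : Fin r, fayArgs r i m = fayN r i m.val := fun _ => rfl
lemma psiA_eqN : ∀ m : Fin r, psiA r m = psiN r m.val := fun _ => rfl
lemma psiInv_eqN : ∀ m : Fin r, psiInv r m = psiInvN r m.val := fun _ => rfl
lemma sh1Inv_eqN (i : ℕ) : ∀ m : Fin r, sh1Inv r i m = sh1InvN r i m.val := fun _ => rfl
lemma fayInv_eqN (i : ℕ) : ∀ m : Fin r, fayInv r i m = fayInvN r i m.val := fun _ => rfl
lemma rotArgs_eqN (k : ℕ) : ∀ m : Fin r, rotArgs r k m = rotN r k m.val := fun _ => rfl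
lemma circComp_eqN (i : ℕ) : ∀ m : Fin r, circComp r i m = circCompN r i m.val := fun _ => rfl
lemma circCompInv_eqN (i : ℕ) : ∀ m : Fin r, circCompInv r i m = circCompInvN r i m.val :=
  fun _ => rfl

lemma sum_swapN' (t : ℕ) : ∑ k ∈ range t, swapN r k = Xn r (r - t) := sum_swapN t

lemma LInv_swapArgs : LInv (swapArgs r) (swapInv r) := by
  intro m
  have hm := m.isLt
  rw [swapArgs_eqN m, ← Xn_val m, swapN, map_sub]
  by_cases h0 : m.val = 0
  · rw [aeval_XnF swapInv_eqN (by omega), aeval_Xn_zero (by omega), swapInvN]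
    rw [show r - (r - 1 - m.val) = 1 by omega, sumXn_one (by omega), h0]
    ring
  · rw [aeval_XnF swapInv_eqN (by omega), aeval_XnF swapInv_eqN (by omega), swapInvN, swapInvN]
    rw [show r - (r - 1 - m.val) = m.val + 1 by omega, show r - (r - m.val) = m.val by omega,
      sumXn_succ]
    ring

lemma LInv_swapInv : LInv (swapInv r) (swapArgs r) := by
  intro m
  have hm := m.isLt
  rw [swapInv_eqN m, ← Xn_val m, swapInvN, aeval_sumXnF swapArgs_eqN (by omega), sum_swapN']
  rw [show r - (r - m.val) = m.val by omega]

lemma LInv_pushArgs (hr : 1 ≤ r) : LInv (pushArgs r) (pushInvArgs r) := by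
  intro m
  have hm := m.isLt
  rw [pushArgs_eqN m, ← Xn_val m, pushN]
  by_cases h0 : m.val = 0
  · rw [if_pos h0, map_neg, aeval_sumXnF pushInvArgs_eqN (le_refl r)]
    have : ∀ k, pushInvN r k = (if k = r - 1 then -(sumXn r r) else Xn r (k + 1)) := fun _ => rfl
    simp only [this]
    rw [sum_pushInvN hr, h0]
    ring
  · rw [if_neg h0, aeval_XnF pushInvArgs_eqN (by omega), pushInvN, if_neg (by omega),
      show m.val - 1 + 1 = m.val by omega]

lemma LInv_pushVInvArgs (hr : 1 ≤ r) : LInv (pushVInvArgs r) (pushVArgs r) := by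
  intro m
  have hm := m.isLt
  rw [pushVInvArgs_eqN m, ← Xn_val m, pushVInvN]
  by_cases h0 : m.val = r - 1
  · rw [if_pos h0, map_neg, aeval_XnF pushVArgs_eqN (by omega), pushVN, if_pos rfl, h0]
    ring
  · rw [if_neg h0, map_sub, aeval_XnF pushVArgs_eqN (by omega),
      aeval_XnF pushVArgs_eqN (by omega), pushVN, pushVN, if_neg (by omega), if_pos rfl,
      Nat.add_sub_cancel]
    ring

lemma LInv_pushVArgs (hr : 1 ≤ r) : LInv (pushVArgs r) (pushVInvArgs r) := by
  intro m
  have hm := m.isLt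
  rw [pushVArgs_eqN m, ← Xn_val m, pushVN]
  by_cases h0 : m.val = 0
  · rw [if_pos h0, map_neg, aeval_XnF pushVInvArgs_eqN (by omega), pushVInvN, if_pos rfl, h0]
    ring
  · rw [if_neg h0, map_sub, aeval_XnF pushVInvArgs_eqN (by omega),
      aeval_XnF pushVInvArgs_eqN (by omega), pushVInvN, pushVInvN, if_neg (by omega), if_pos rfl,
      show m.val - 1 + 1 = m.val by omega]
    ring

lemma LInv_sh1Args {i : ℕ} (hi : 1 ≤ i) (hir : i ≤ r) : LInv (sh1Args r i) (sh1Inv r i) := by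
  intro m
  have hm := m.isLt
  rw [sh1Args_eqN i m, ← Xn_val m, sh1N]
  by_cases h1 : m.val + 1 < i
  · rw [if_pos h1, aeval_XnF (sh1Inv_eqN i) (by omega), sh1InvN, if_neg (by omega),
      if_pos (by omega), Nat.add_sub_cancel]
  by_cases h2 : m.val + 1 = i
  · rw [if_neg h1, if_pos h2, aeval_XnF (sh1Inv_eqN i) (by omega), sh1InvN, if_pos rfl]
    congr 1; omega
  · rw [if_neg h1, if_neg h2, aeval_XnF (sh1Inv_eqN i) (by omega), sh1InvN,
      if_neg (by omega), if_neg (by omega)]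

lemma LInv_fayArgs {i : ℕ} (hi : 1 ≤ i) (hir : i ≤ r) : LInv (fayArgs r i) (fayInv r i) := by
  intro m
  have hm := m.isLt
  rw [fayArgs_eqN i m, ← Xn_val m, fayN]
  by_cases h1 : m.val + 1 < i
  · rw [if_pos h1, aeval_XnF (fayInv_eqN i) (by omega), fayInvN, if_neg (by omega),
      if_pos (by omega), Nat.add_sub_cancel]
  by_cases h2 : m.val + 1 = i
  · rw [if_neg h1, if_pos h2, map_neg, aeval_sumXnF (fayInv_eqN i) hir]
    have : ∀ k, fayInvN r i k = (if k = 0 then -(sumXn r i) else if k < i then Xn r (k - 1)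
      else if k = i then Xn r i + Xn r (i - 1) else Xn r k) := fun _ => rfl
    simp only [this]
    rw [sum_fayInvN_eq hi hir, show i - 1 = m.val by omega]
    ring
  by_cases h3 : m.val = i
  · rw [if_neg h1, if_neg h2, if_pos h3, aeval_sumXnF (fayInv_eqN i) (by omega)]
    have : ∀ k, fayInvN r i k = (if k = 0 then -(sumXn r i) else if k < i then Xn r (k - 1)
      else if k = i then Xn r i + Xn r (i - 1) else Xn r k) := fun _ => rfl
    simp only [this]
    rw [sum_fayInvN_succ hi (by omega), h3]
  · rw [if_neg h1, if_neg h2, if_neg h3, aeval_XnF (fayInv_eqN i) (by omega), fayInvN,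
      if_neg (by omega), if_neg (by omega), if_neg (by omega)]

lemma LInv_psiA (hr : 1 ≤ r) : LInv (psiA r) (psiInv r) := by
  intro m
  have hm := m.isLt
  rw [psiA_eqN m, ← Xn_val m, psiN]
  by_cases h0 : m.val = 0
  · rw [if_pos h0, map_neg, aeval_XnF psiInv_eqN (by omega), psiInvN, if_pos rfl, h0]
    ring
  · rw [if_neg h0, map_sub, aeval_sumXnF psiInv_eqN (by omega),
      aeval_XnF psiInv_eqN (by omega)]
    have : ∀ k, psiInvN r k = (if k = 0 then -(Xn r 0) else if k = 1 then Xn r (r - 1)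
      else Xn r (r - k) - Xn r (r - k + 1)) := fun _ => rfl
    simp only [this]
    rw [sum_psiInvN (by omega) (by omega),
      show r + 1 - (r + 1 - m.val) = m.val by omega, if_pos trivial]
    ring

lemma LInv_circComp {i : ℕ} (hir : i < r) : LInv (circComp r i) (circCompInv r i) := by
  intro m
  have hm := m.isLt
  rw [circComp_eqN i m, ← Xn_val m, circCompN]
  have hlt : (m.val + i) % r < r := Nat.mod_lt _ (by omega)
  rw [aeval_XnF (circCompInv_eqN i) hlt]
  simp only [circCompInvN]
  congr 1
  by_cases h : m.val + i < r
  · rw [Nat.mod_eq_of_lt h]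
    have : m.val + i + (r - i) = m.val + r := by omega
    rw [this, Nat.add_mod_right, Nat.mod_eq_of_lt hm]
  · have h1 : (m.val + i) % r = m.val + i - r := by
      rw [Nat.mod_eq_sub_mod (by omega), Nat.mod_eq_of_lt (by omega)]
    rw [h1, show m.val + i - r + (r - i) = m.val by omega, Nat.mod_eq_of_lt hm]

end LInvs

section Ids
open MvPolynomial Finset Function
variable {r : ℕ}


lemma pushVInvN_last {k : ℕ} (h : k = r - 1) : pushVInvN r k = -(Xn r 0) := by
  rw [pushVInvN, if_pos h]
lemma pushVInvN_ne {k : ℕ} (h : ¬ k = r - 1) : pushVInvN r k = Xn r (k + 1) - Xn r 0 := by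
  rw [pushVInvN, if_neg h]
lemma rotN_lt {k m : ℕ} (h : m + k < r) : rotN r k m = Xn r (m + k) - Xn r (k - 1) := by
  rw [rotN, if_pos h]
lemma rotN_eq {k m : ℕ} (h2 : m + k = r) (hr : 1 ≤ k) : rotN r k m = -(Xn r (k - 1)) := by
  rw [rotN, if_neg (by omega), if_pos h2]
lemma rotN_gt {k m : ℕ} (h1 : ¬ m + k < r) (h2 : ¬ m + k = r) :
    rotN r k m = Xn r (m + k - r - 1) - Xn r (k - 1) := by
  rw [rotN, if_neg h1, if_neg h2]

/-- swap ∘ push = pushVInv ∘ swap (on argument families). -/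
lemma id_push_swap (hr : 1 ≤ r) (m : Fin r) :
    aeval (R := ℚ) (pushVInvArgs r) (swapArgs r m) = aeval (R := ℚ) (swapArgs r) (pushArgs r m) := by
  have hm := m.isLt
  rw [swapArgs_eqN m, pushArgs_eqN m, swapN, pushN, map_sub]
  by_cases h0 : m.val = 0
  · rw [if_pos h0, map_neg, aeval_sumXnF swapArgs_eqN (le_refl r), sum_swapN',
      aeval_XnF pushVInvArgs_eqN (by omega), aeval_Xn_zero (by omega),
      pushVInvN_last (by omega), Nat.sub_self]
    ring
  by_cases h1 : m.val = 1
  · rw [if_neg h0, aeval_XnF pushVInvArgs_eqN (by omega), aeval_XnF pushVInvArgs_eqN (by omega),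
      pushVInvN_ne (by omega), pushVInvN_last (by omega),
      aeval_XnF swapArgs_eqN (by omega), swapN,
      show r - 1 - m.val + 1 = r - 1 - (m.val - 1) by omega,
      Xn_zero_of_ge (show r ≤ r - (m.val - 1) by omega)]
    ring
  · rw [if_neg h0, aeval_XnF pushVInvArgs_eqN (by omega), aeval_XnF pushVInvArgs_eqN (by omega),
      pushVInvN_ne (by omega), pushVInvN_ne (by omega),
      aeval_XnF swapArgs_eqN (by omega), swapN,
      show r - 1 - m.val + 1 = r - 1 - (m.val - 1) by omega,
      show r - m.val + 1 = r - (m.val - 1) by omega]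
    ring

lemma id_rot_one : rotArgs r 1 = pushVInvArgs r := by
  funext m
  have hm := m.isLt
  rw [rotArgs_eqN 1 m, pushVInvArgs_eqN m, rotN, pushVInvN]
  by_cases h : m.val + 1 < r
  · rw [if_pos h, if_neg (by omega), Nat.sub_self]
  · rw [if_neg h, if_pos (by omega), if_pos (by omega), Nat.sub_self]

lemma id_rot_step {k : ℕ} (hk : 1 ≤ k) (hkr : k < r) (m : Fin r) :
    aeval (R := ℚ) (rotArgs r k) (pushVInvArgs r m) = rotArgs r (k + 1) m := by
  have hm := m.isLt
  rw [pushVInvArgs_eqN m, rotArgs_eqN (k + 1) m]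
  by_cases h0 : m.val = r - 1
  · rw [pushVInvN_last h0, map_neg, aeval_XnF (rotArgs_eqN k) (by omega),
      rotN_lt (show 0 + k < r by omega), rotN_gt (by omega) (by omega), Nat.zero_add,
      show m.val + (k + 1) - r - 1 = k - 1 by omega, show k + 1 - 1 = k by omega]
    ring
  · rw [pushVInvN_ne h0, map_sub, aeval_XnF (rotArgs_eqN k) (by omega),
      aeval_XnF (rotArgs_eqN k) (by omega), rotN_lt (show 0 + k < r by omega), Nat.zero_add]
    by_cases h1 : m.val + 1 + k < r
    · rw [rotN_lt h1, rotN_lt (show m.val + (k + 1) < r by omega),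
        show m.val + 1 + k = m.val + (k + 1) by omega, show k + 1 - 1 = k by omega]
      ring
    by_cases h2 : m.val + 1 + k = r
    · rw [rotN_eq h2 hk, rotN_eq (show m.val + (k + 1) = r by omega) (by omega),
        show k + 1 - 1 = k by omega]
      ring
    · rw [rotN_gt h1 h2, rotN_gt (show ¬ m.val + (k + 1) < r by omega)
        (show ¬ m.val + (k + 1) = r by omega),
        show m.val + 1 + k - r - 1 = m.val + (k + 1) - r - 1 by omega,
        show k + 1 - 1 = k by omega]
      ring

lemma id_circComp_zero : circComp r 0 = fun m : Fin r => (X m : MPoly r) := by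
  funext m
  rw [circComp_eqN 0 m, circCompN, Nat.add_zero, Nat.mod_eq_of_lt m.isLt, Xn_val]

lemma id_circ_step {i : ℕ} (hr : 2 ≤ r) (hir : i < r) (m : Fin r) :
    aeval (R := ℚ) (circArgs r) (circComp r i m) = circComp r (i + 1) m := by
  have hm := m.isLt
  rw [circComp_eqN i m, circComp_eqN (i + 1) m]
  simp only [circCompN]
  have hlt : (m.val + i) % r < r := Nat.mod_lt _ (by omega)
  rw [aeval_XnF circArgs_eqN hlt, circN]
  have hmod : (m.val + (i + 1)) % r = ((m.val + i) % r + 1) % r := by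
    rw [show m.val + (i + 1) = m.val + i + 1 from by omega, Nat.add_mod (m.val + i) 1 r,
      Nat.mod_eq_of_lt (show 1 < r by omega)]
  by_cases h : (m.val + i) % r = r - 1
  · rw [if_pos h, hmod, h, show r - 1 + 1 = r by omega, Nat.mod_self]
  · rw [if_neg h, hmod, Nat.mod_eq_of_lt (show (m.val + i) % r + 1 < r by omega)]

/-- Key Fay identity: fayArgs ∘ swapInv = psiA ∘ sh1Args (r+1-i). -/
lemma id_fay (hr : 1 ≤ r) {i : ℕ} (hi : 1 ≤ i) (hir : i ≤ r) (m : Fin r) :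
    aeval (R := ℚ) (fayArgs r i) (swapInv r m)
      = aeval (R := ℚ) (psiA r) (sh1Args r (r + 1 - i) m) := by
  have hm := m.isLt
  rw [swapInv_eqN m, sh1Args_eqN (r + 1 - i) m, swapInvN, sh1N,
    aeval_sumXnF (fayArgs_eqN i) (by omega)]
  have hfa : ∀ k, fayN r i k = (if k + 1 < i then Xn r (k + 1) else if k + 1 = i
      then -(sumXn r i) else if k = i then sumXn r (i + 1) else Xn r k) := fun _ => rfl
  simp only [hfa]
  by_cases h1 : m.val + 1 < r + 1 - i
  · rw [if_pos h1, aeval_XnF psiA_eqN (by omega), psiN, if_neg (by omega),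
      sum_fayN_gt hi (by omega), show r + 1 - (m.val + 1) = r - m.val by omega]
  by_cases h2 : m.val + 1 = r + 1 - i
  · rw [if_neg h1, if_pos h2, aeval_XnF psiA_eqN (by omega), psiN, if_pos rfl,
      show r - m.val = i by omega, sum_fayN_eq hi]
  · rw [if_neg h1, if_neg h2, aeval_XnF psiA_eqN (by omega), psiN, if_neg (by omega),
      sum_fayN_lt (by omega), show r - m.val + 1 = r + 1 - m.val by omega]

/-- Term-0 identity: swapInv ∘ pushVArgs = psiA. -/
lemma id_term0 (hr : 1 ≤ r) (m : Fin r) :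
    aeval (R := ℚ) (swapInv r) (pushVArgs r m) = psiA r m := by
  have hm := m.isLt
  rw [pushVArgs_eqN m, psiA_eqN m, pushVN, psiN]
  by_cases h0 : m.val = 0
  · rw [if_pos h0, if_pos h0, map_neg, aeval_XnF swapInv_eqN (by omega), swapInvN,
      show r - (r - 1) = 1 by omega, sumXn_one hr]
  · rw [if_neg h0, if_neg h0, map_sub, aeval_XnF swapInv_eqN (by omega),
      aeval_XnF swapInv_eqN (by omega), swapInvN, swapInvN,
      show r - (m.val - 1) = r + 1 - m.val by omega, show r - (r - 1) = 1 by omega,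
      sumXn_one hr]

/-- Fay multiplier identity. -/
lemma id_fay_factor (hr : 1 ≤ r) {i : ℕ} (hi : 1 ≤ i) (hir : i ≤ r) :
    aeval (R := ℚ) (fayArgs r i) (sumXn r r)
      = if i = r then -(Xn r 0) else sumXn r r - Xn r 0 := by
  rw [aeval_sumXnF (fayArgs_eqN i) (le_refl r)]
  have hfa : ∀ k, fayN r i k = (if k + 1 < i then Xn r (k + 1) else if k + 1 = i
      then -(sumXn r i) else if k = i then sumXn r (i + 1) else Xn r k) := fun _ => rfl
  simp only [hfa]
  by_cases h : i = r
  · rw [if_pos h, ← h, sum_fayN_eq hi]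
  · rw [if_neg h, sum_fayN_gt hi (by omega)]

/-- Circ-sum identity: circComp i ∘ rotArgs (r-i) = pushVArgs ∘ sh1Args (i+1). -/
lemma id_circ_main (hr : 2 ≤ r) {i : ℕ} (hir : i < r) (m : Fin r) :
    aeval (R := ℚ) (circComp r i) (rotArgs r (r - i) m)
      = aeval (R := ℚ) (pushVArgs r) (sh1Args r (i + 1) m) := by
  have hm := m.isLt
  rw [rotArgs_eqN (r - i) m, sh1Args_eqN (i + 1) m, rotN, sh1N]
  have hc : ∀ k, circCompN r i k = Xn r ((k + i) % r) := fun _ => rfl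
  by_cases h1 : m.val + (r - i) < r
  · -- m < i
    rw [if_pos h1, map_sub, aeval_XnF (circComp_eqN i) (by omega),
      aeval_XnF (circComp_eqN i) (by omega), hc, hc]
    rw [show m.val + (r - i) + i = m.val + r by omega, Nat.add_mod_right,
      Nat.mod_eq_of_lt hm, show r - i - 1 + i = r - 1 by omega,
      Nat.mod_eq_of_lt (by omega)]
    rw [if_pos (by omega), aeval_XnF pushVArgs_eqN (by omega), pushVN, if_neg (by omega),
      Nat.add_sub_cancel]
  by_cases h2 : m.val + (r - i) = r
  · -- m = i
    rw [if_neg h1, if_pos h2, map_neg, aeval_XnF (circComp_eqN i) (by omega), hc,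
      show r - i - 1 + i = r - 1 by omega, Nat.mod_eq_of_lt (by omega)]
    rw [if_neg (by omega), if_pos (by omega), aeval_XnF pushVArgs_eqN (by omega), pushVN,
      if_pos rfl]
  · -- m > i
    rw [if_neg h1, if_neg h2, map_sub, aeval_XnF (circComp_eqN i) (by omega),
      aeval_XnF (circComp_eqN i) (by omega), hc, hc,
      show m.val + (r - i) - r - 1 + i = m.val - 1 by omega, Nat.mod_eq_of_lt (by omega),
      show r - i - 1 + i = r - 1 by omega, Nat.mod_eq_of_lt (by omega)]
    rw [if_neg (by omega), if_neg (by omega), aeval_XnF pushVArgs_eqN (by omega), pushVN,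
      if_neg (by omega)]

lemma id_sh1_one : sh1Args r 1 = fun m : Fin r => (X m : MPoly r) := by
  funext m
  rw [sh1Args_eqN 1 m, sh1N, ← Xn_val m]
  by_cases h0 : m.val = 0
  · rw [if_neg (by omega), if_pos (by omega), h0]
  · rw [if_neg (by omega), if_neg (by omega)]

/-- pushVArgs ∘ pushVInvArgs = id (generators). -/
lemma id_pushV_inv (hr : 1 ≤ r) (m : Fin r) :
    aeval (R := ℚ) (pushVArgs r) (pushVInvArgs r m) = X m :=
  LInv_pushVInvArgs hr m

end Ids

section Asm
open MvPolynomial Finset Function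
variable {r : ℕ}

lemma inj_swapArgs : Injective (aeval (R := ℚ) (swapArgs r) : MPoly r →ₐ[ℚ] MPoly r) :=
  LInv.inj LInv_swapArgs
lemma inj_swapInv : Injective (aeval (R := ℚ) (swapInv r) : MPoly r →ₐ[ℚ] MPoly r) :=
  LInv.inj LInv_swapInv
lemma inj_pushArgs (hr : 1 ≤ r) : Injective (aeval (R := ℚ) (pushArgs r) : MPoly r →ₐ[ℚ] MPoly r) :=
  LInv.inj (LInv_pushArgs hr)
lemma inj_pushVArgs (hr : 1 ≤ r) :
    Injective (aeval (R := ℚ) (pushVArgs r) : MPoly r →ₐ[ℚ] MPoly r) :=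
  LInv.inj (LInv_pushVArgs hr)
lemma inj_pushVInvArgs (hr : 1 ≤ r) :
    Injective (aeval (R := ℚ) (pushVInvArgs r) : MPoly r →ₐ[ℚ] MPoly r) :=
  LInv.inj (LInv_pushVInvArgs hr)
lemma inj_psiA (hr : 1 ≤ r) : Injective (aeval (R := ℚ) (psiA r) : MPoly r →ₐ[ℚ] MPoly r) :=
  LInv.inj (LInv_psiA hr)
lemma inj_sh1Args {i : ℕ} (hi : 1 ≤ i) (hir : i ≤ r) :
    Injective (aeval (R := ℚ) (sh1Args r i) : MPoly r →ₐ[ℚ] MPoly r) :=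
  LInv.inj (LInv_sh1Args hi hir)
lemma inj_fayArgs {i : ℕ} (hi : 1 ≤ i) (hir : i ≤ r) :
    Injective (aeval (R := ℚ) (fayArgs r i) : MPoly r →ₐ[ℚ] MPoly r) :=
  LInv.inj (LInv_fayArgs hi hir)
lemma inj_circComp {i : ℕ} (hir : i < r) :
    Injective (aeval (R := ℚ) (circComp r i) : MPoly r →ₐ[ℚ] MPoly r) :=
  LInv.inj (LInv_circComp hir)

lemma circArgs_eq_circComp_one (hr : 1 ≤ r) : circArgs r = circComp r 1 := by
  funext m
  have hm := m.isLt
  rw [circArgs_eqN m, circComp_eqN 1 m, circN, circCompN]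
  by_cases h : m.val = r - 1
  · rw [if_pos h, h, show r - 1 + 1 = r by omega, Nat.mod_self]
  · rw [if_neg h, Nat.mod_eq_of_lt (by omega)]

lemma inj_circArgs (hr : 2 ≤ r) :
    Injective (aeval (R := ℚ) (circArgs r) : MPoly r →ₐ[ℚ] MPoly r) := by
  rw [circArgs_eq_circComp_one (by omega)]
  exact inj_circComp (by omega)

lemma rotArgs_eq_aux {k : ℕ} (hk : 1 ≤ k) (hkr : k < r) :
    rotArgs r (k + 1) = fun m => aeval (R := ℚ) (rotArgs r k) (pushVInvArgs r m) :=
  (funext (id_rot_step hk hkr)).symm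

lemma inj_rotArgs : ∀ k : ℕ, 1 ≤ k → k ≤ r →
    Injective (aeval (R := ℚ) (rotArgs r k) : MPoly r →ₐ[ℚ] MPoly r) := by
  intro k
  induction k with
  | zero => omega
  | succ n ih =>
    intro _ hnr
    by_cases hn : n = 0
    · subst hn
      rw [show (0 : ℕ) + 1 = 1 from rfl, id_rot_one]
      exact inj_pushVInvArgs (by omega)
    · rw [rotArgs_eq_aux (by omega) (by omega)]
      have : ⇑(aeval (R := ℚ) (fun m => aeval (R := ℚ) (rotArgs r n) (pushVInvArgs r m)) :
          MPoly r →ₐ[ℚ] MPoly r) = ⇑((aeval (R := ℚ) (rotArgs r n)).comp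
            (aeval (R := ℚ) (pushVInvArgs r))) := by
        rw [aeval_comp_eq]
      rw [this, AlgHom.coe_comp]
      exact (ih (by omega) (by omega)).comp (inj_pushVInvArgs (by omega))

variable {M : Mould}

lemma pushVInv_invariance (hpush : PushInvariant M) (hr : 1 ≤ r) :
    msubst (pushVInvArgs r) (swapM M r) = swapM M r := by
  show msubst (pushVInvArgs r) (msubst (swapArgs r) (M r)) = _
  rw [msubst_msubst (inj_pushVInvArgs hr) inj_swapArgs,
    show (fun m => aeval (R := ℚ) (pushVInvArgs r) (swapArgs r m))
      = (fun m => aeval (R := ℚ) (swapArgs r) (pushArgs r m)) from funext (id_push_swap hr),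
    ← msubst_msubst inj_swapArgs (inj_pushArgs hr)]
  show msubst (swapArgs r) (pushU M r) = _
  rw [hpush r hr]
  rfl

lemma rot_invariance (hpush : PushInvariant M) (hr : 1 ≤ r) :
    ∀ k : ℕ, 1 ≤ k → k ≤ r → msubst (rotArgs r k) (swapM M r) = swapM M r := by
  intro k
  induction k with
  | zero => omega
  | succ n ih =>
    intro _ hnr
    by_cases hn : n = 0
    · subst hn
      rw [show (0 : ℕ) + 1 = 1 from rfl, id_rot_one]
      exact pushVInv_invariance hpush hr
    · rw [rotArgs_eq_aux (by omega) (by omega),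
        ← msubst_msubst (inj_rotArgs n (by omega) (by omega)) (inj_pushVInvArgs hr),
        pushVInv_invariance hpush hr, ih (by omega) (by omega)]

lemma rotArgs_full (hr : 1 ≤ r) : rotArgs r r = pushVArgs r := by
  funext m
  have hm := m.isLt
  rw [rotArgs_eqN r m, pushVArgs_eqN m, pushVN]
  by_cases h0 : m.val = 0
  · rw [rotN_eq (by omega) hr, if_pos h0]
  · rw [rotN_gt (by omega) (by omega), if_neg h0,
      show m.val + r - r - 1 = m.val - 1 by omega]

lemma pushV_invariance (hpush : PushInvariant M) (hr : 1 ≤ r) :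
    msubst (pushVArgs r) (swapM M r) = swapM M r := by
  rw [← rotArgs_full hr]
  exact rot_invariance hpush hr r hr (le_refl r)

lemma M_eq (hr : 1 ≤ r) : M r = msubst (swapInv r) (swapM M r) := by
  show _ = msubst (swapInv r) (msubst (swapArgs r) (M r))
  rw [msubst_msubst inj_swapInv inj_swapArgs,
    show (fun m => aeval (R := ℚ) (swapInv r) (swapArgs r m))
      = (fun m : Fin r => (X m : MPoly r)) from funext LInv_swapArgs, msubst_id]

lemma psiA_B (hpush : PushInvariant M) (hr : 1 ≤ r) :
    msubst (swapInv r) (swapM M r) = msubst (psiA r) (swapM M r) := by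
  conv_lhs => rw [← pushV_invariance hpush hr]
  rw [msubst_msubst inj_swapInv (inj_pushVArgs hr),
    show (fun m => aeval (R := ℚ) (swapInv r) (pushVArgs r m)) = psiA r
      from funext (id_term0 hr)]

end Asm

section Main
open MvPolynomial Finset Function
variable {r : ℕ} {M : Mould}

lemma fay_eq (hpush : PushInvariant M) (hr : 2 ≤ r) :
    Fay (durM M) r = toF (sumXn r r - Xn r 0) *
      msubst (psiA r) (∑ j ∈ Finset.Icc 1 r, msubst (sh1Args r j) (swapM M r)) := by
  set B := swapM M r with hB
  set T : ℕ → MFrac r := fun j => msubst (psiA r) (msubst (sh1Args r j) B) with hTdef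
  have hT1 : T 1 = msubst (psiA r) B := by
    rw [hTdef]
    simp only []
    rw [id_sh1_one, msubst_id]
  have hterm : ∀ i ∈ Finset.Icc 1 r, msubst (fayArgs r i) (durM M r)
      = toF (if i = r then -(Xn r 0) else sumXn r r - Xn r 0) * T (r + 1 - i) := by
    intro i hi
    rw [Finset.mem_Icc] at hi
    show msubst (fayArgs r i) (toF (sumXn r r) * M r) = _
    rw [msubst_mul (inj_fayArgs hi.1 hi.2), msubst_toF (inj_fayArgs hi.1 hi.2),
      id_fay_factor (by omega) hi.1 hi.2]
    congr 1
    rw [M_eq (M := M) (r := r) (by omega), hTdef]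
    simp only []
    rw [msubst_msubst (inj_fayArgs hi.1 hi.2) inj_swapInv,
      show (fun m => aeval (R := ℚ) (fayArgs r i) (swapInv r m))
        = (fun m => aeval (R := ℚ) (psiA r) (sh1Args r (r + 1 - i) m))
        from funext (id_fay (by omega) hi.1 hi.2),
      ← msubst_msubst (inj_psiA (by omega))
        (inj_sh1Args (i := r + 1 - i) (by omega) (by omega))]
  have hreindex : ∑ i ∈ Finset.Icc 1 r,
      toF (if i = r then -(Xn r 0) else sumXn r r - Xn r 0) * T (r + 1 - i)
      = ∑ j ∈ Finset.Icc 1 r,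
          toF (if j = 1 then -(Xn r 0) else sumXn r r - Xn r 0) * T j := by
    refine Finset.sum_nbij' (fun a => r + 1 - a) (fun a => r + 1 - a) ?_ ?_ ?_ ?_ ?_
    · intro a ha; rw [Finset.mem_Icc] at ha
      show r + 1 - a ∈ Finset.Icc 1 r
      rw [Finset.mem_Icc]; omega
    · intro a ha; rw [Finset.mem_Icc] at ha
      show r + 1 - a ∈ Finset.Icc 1 r
      rw [Finset.mem_Icc]; omega
    · intro a ha; rw [Finset.mem_Icc] at ha
      show r + 1 - (r + 1 - a) = a
      omega
    · intro a ha; rw [Finset.mem_Icc] at ha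
      show r + 1 - (r + 1 - a) = a
      omega
    · intro a ha
      rw [Finset.mem_Icc] at ha
      show _ = toF (if r + 1 - a = 1 then -(Xn r 0) else sumXn r r - Xn r 0) * T (r + 1 - a)
      congr 2
      by_cases h : a = r
      · rw [if_pos h, if_pos (by omega)]
      · rw [if_neg h, if_neg (by omega)]
  have hdur : durM M r = toF (sumXn r r) * T 1 := by
    show toF (sumXn r r) * M r = _
    rw [M_eq (M := M) (r := r) (show 1 ≤ r by omega), psiA_B hpush (by omega), hT1]
  have hRHS : toF (sumXn r r - Xn r 0)
      * msubst (psiA r) (∑ j ∈ Finset.Icc 1 r, msubst (sh1Args r j) B)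
      = ∑ j ∈ Finset.Icc 1 r, toF (sumXn r r - Xn r 0) * T j := by
    rw [msubst_sum (inj_psiA (show 1 ≤ r by omega)) _ (fun j => msubst (sh1Args r j) B),
      Finset.mul_sum]
  show durM M r + ∑ i ∈ Finset.Icc 1 r, msubst (fayArgs r i) (durM M r) = _
  rw [Finset.sum_congr rfl hterm, hreindex, hdur, hRHS]
  have key : ∑ j ∈ Finset.Icc 1 r, toF (sumXn r r - Xn r 0) * T j
      - ∑ j ∈ Finset.Icc 1 r, toF (if j = 1 then -(Xn r 0) else sumXn r r - Xn r 0) * T j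
      = toF (sumXn r r) * T 1 := by
    rw [← Finset.sum_sub_distrib]
    rw [Finset.sum_eq_single 1]
    · rw [if_pos rfl, show toF (-(Xn r 0)) = -toF (Xn r 0) from map_neg _ _,
        show toF (sumXn r r - Xn r 0) = toF (sumXn r r) - toF (Xn r 0) from map_sub _ _ _]
      ring
    · intro b hb hb1
      rw [if_neg hb1]
      ring
    · intro h1
      exact absurd (Finset.mem_Icc.mpr ⟨le_refl 1, by omega⟩) h1
  linear_combination -key

lemma iterate_circ (C : Mould) (hr : 2 ≤ r) :
    ∀ i : ℕ, i < r → (circM^[i] C) r = msubst (circComp r i) (C r) := by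
  intro i
  induction i with
  | zero =>
    intro _
    rw [Function.iterate_zero_apply, id_circComp_zero, msubst_id]
  | succ n ih =>
    intro hn
    rw [Function.iterate_succ_apply']
    show msubst (circArgs r) ((circM^[n] C) r) = _
    rw [ih (by omega), msubst_msubst (inj_circArgs hr) (inj_circComp (show n < r by omega)),
      show (fun m => aeval (R := ℚ) (circArgs r) (circComp r n m)) = circComp r (n + 1)
        from funext (id_circ_step hr (by omega))]

lemma circ_eq (hpush : PushInvariant M) (hr : 2 ≤ r) :
    ∑ i ∈ Finset.range r, (circM^[i] (swapM M)) r
      = msubst (pushVArgs r) (∑ j ∈ Finset.Icc 1 r, msubst (sh1Args r j) (swapM M r)) := by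
  have hterm : ∀ i ∈ Finset.range r, (circM^[i] (swapM M)) r
      = msubst (pushVArgs r) (msubst (sh1Args r (i + 1)) (swapM M r)) := by
    intro i hi
    rw [Finset.mem_range] at hi
    rw [iterate_circ _ hr i hi]
    conv_lhs => rw [← rot_invariance hpush (by omega) (r - i) (by omega) (by omega)]
    rw [msubst_msubst (inj_circComp hi) (inj_rotArgs (r - i) (by omega) (by omega)),
      show (fun m => aeval (R := ℚ) (circComp r i) (rotArgs r (r - i) m))
        = (fun m => aeval (R := ℚ) (pushVArgs r) (sh1Args r (i + 1) m))
        from funext (id_circ_main hr hi),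
      ← msubst_msubst (inj_pushVArgs (by omega)) (inj_sh1Args (by omega) (by omega))]
  rw [Finset.sum_congr rfl hterm, ← msubst_sum (inj_pushVArgs (show 1 ≤ r by omega))]
  congr 1
  refine Finset.sum_nbij' (fun a => a + 1) (fun a => a - 1) ?_ ?_ ?_ ?_ ?_
  · intro a ha; rw [Finset.mem_range] at ha
    show a + 1 ∈ Finset.Icc 1 r
    rw [Finset.mem_Icc]; omega
  · intro a ha; rw [Finset.mem_Icc] at ha
    show a - 1 ∈ Finset.range r
    rw [Finset.mem_range]; omega
  · intro a _
    show a + 1 - 1 = a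
    omega
  · intro a ha; rw [Finset.mem_Icc] at ha
    show a - 1 + 1 = a
    omega
  · intro a _; rfl

lemma eval_Xn1 {k : ℕ} (hk : k < r) :
    MvPolynomial.eval (fun j : Fin r => if j.val = 1 then (1 : ℚ) else 0) (Xn r k)
      = if k = 1 then (1 : ℚ) else 0 := by
  rw [Xn, dif_pos hk, MvPolynomial.eval_X]

lemma pi_ne_zero (hr : 2 ≤ r) : toF (sumXn r r - Xn r 0) ≠ (0 : MFrac r) := by
  intro h
  have h2 : (sumXn r r - Xn r 0 : MPoly r) = 0 := by
    apply IsFractionRing.injective (MPoly r) (MFrac r)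
    rw [map_zero]; exact h
  have h3 := congrArg (MvPolynomial.eval (fun j : Fin r => if j.val = 1 then (1 : ℚ) else 0)) h2
  rw [map_sub, map_zero, sumXn, map_sum, eval_Xn1 (show 0 < r by omega)] at h3
  rw [Finset.sum_congr rfl (fun k hk =>
    eval_Xn1 (show k < r by rw [Finset.mem_range] at hk; omega))] at h3
  rw [Finset.sum_ite_eq' (Finset.range r) 1 (fun _ => (1 : ℚ))] at h3
  rw [if_pos (by rw [Finset.mem_range]; omega), if_neg (by omega)] at h3
  norm_num at h3

end Main

/-- **Theorem 1.2.** Let `M ∈ ARI` be alternal and push-invariant with `ΔM` a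
polynomial mould, and set `A' := dur M`.  Then the following are equivalent:
(i) the strict Fay relations `ℱ(A')(u_1,…,u_r) = 0` for all `r ≥ 2`;
(ii) `swap M` satisfies the first alternality relation
`(swap M)(sh((v_1),(v_2,…,v_r))) = 0` for all `r ≥ 2`;
(iii) `swap M` is circ-neutral: `Σ_{i=0}^{r−1} circ^i(swap M) = 0` for all `r ≥ 2`. -/
theorem theorem_1_2 (M : Mould) (hM0 : M 0 = 0) (halt : Alternal M)
    (hpush : PushInvariant M) (hpoly : IsPolynomialMould (deltaM M)) :
    ((∀ r : ℕ, 2 ≤ r → Fay (durM M) r = 0) ↔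
        (∀ r : ℕ, 2 ≤ r →
          ∑ i ∈ Finset.Icc 1 r, msubst (sh1Args r i) (swapM M r) = 0)) ∧
    ((∀ r : ℕ, 2 ≤ r →
          ∑ i ∈ Finset.Icc 1 r, msubst (sh1Args r i) (swapM M r) = 0) ↔
        (∀ r : ℕ, 2 ≤ r →
          ∑ i ∈ Finset.range r, (circM^[i] (swapM M)) r = 0)) := by
  have key1 : ∀ r : ℕ, 2 ≤ r → (Fay (durM M) r = 0 ↔
      ∑ i ∈ Finset.Icc 1 r, msubst (sh1Args r i) (swapM M r) = 0) := by
    intro r hr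
    rw [fay_eq hpush hr]
    constructor
    · intro h0
      rcases mul_eq_zero.mp h0 with h | h
      · exact absurd h (pi_ne_zero hr)
      · exact (msubst_eq_zero_iff (inj_psiA (show 1 ≤ r by omega))).mp h
    · intro h0
      rw [h0, msubst_eq_lift (inj_psiA (show 1 ≤ r by omega)), map_zero, mul_zero]
  have key2 : ∀ r : ℕ, 2 ≤ r →
      ((∑ i ∈ Finset.Icc 1 r, msubst (sh1Args r i) (swapM M r) = 0) ↔
        ∑ i ∈ Finset.range r, (circM^[i] (swapM M)) r = 0) := by
    intro r hr
    rw [circ_eq hpush hr]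
    exact (msubst_eq_zero_iff (inj_pushVArgs (show 1 ≤ r by omega))).symm
  exact ⟨⟨fun h r hr => (key1 r hr).mp (h r hr), fun h r hr => (key1 r hr).mpr (h r hr)⟩,
    ⟨fun h r hr => (key2 r hr).mp (h r hr), fun h r hr => (key2 r hr).mpr (h r hr)⟩⟩

end
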